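/- arXiv:2002.02950 — 2 statements merged into one kernel-verified Lean document; each statement's English description precedes it below -/
import Mathlib

section
/- Let p₀ be a probability measure on ℝ^d and let A* be the Bayesian mixture algorithm with prior p₀. Let θ* ∈ ℝ^d and η ≥ 0, and let Q be a probability measure on ℝ^d, absolutely continuous with respect to p₀ with finite Kullback–Leibler divergence D(Q‖p₀), whose mean is θ* (∫ θ_i dQ(θ) = θ*_i for each i), whose coordinates are uncorrelated under Q (∫ (θ_i − θ*_i)(θ_j − θ*_j) dQ(θ) = 0 for i ≠ j), and whose coordinate variances satisfy ∫ (θ_i − θ*_i)² dQ(θ) ≤ η² for each i. Then for every horizon T and every sequence S_T with ‖x_t‖_∞ ≤ 1 for all t, Regret(A*,S_T,θ*) ≤ D(Q‖p₀) + dTη²/8. -/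
open MeasureTheory Real Filter

noncomputable section

/-- Dot product on `Fin d → ℝ`. -/
def dotp {d : ℕ} (x θ : Fin d → ℝ) : ℝ := ∑ i, x i * θ i

/-- Logistic model probability of label `y ∈ {−1,1}`: `p(y|x,θ) = 1/(1+exp(−y⟨x,θ⟩))`. -/
def lprob {d : ℕ} (θ x : Fin d → ℝ) (y : ℝ) : ℝ :=
  1 / (1 + Real.exp (-(y * dotp x θ)))

/-- Logistic loss `ℓ(θ,x,y) = log(1+exp(−y⟨x,θ⟩))`. -/
def lloss {d : ℕ} (θ x : Fin d → ℝ) (y : ℝ) : ℝ :=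
  Real.log (1 + Real.exp (-(y * dotp x θ)))

/-- Cumulative loss `L(θ,S_T)` of the parameter `θ` on the sequence `S`. -/
def seqLoss {d T : ℕ} (θ : Fin d → ℝ) (S : Fin T → (Fin d → ℝ) × ℝ) : ℝ :=
  ∑ t, lloss θ (S t).1 (S t).2

/-- An online algorithm: maps a history, a current feature vector and a label to a probability. -/
abbrev Alg (d : ℕ) := List ((Fin d → ℝ) × ℝ) → (Fin d → ℝ) → ℝ → ℝ

/-- Validity of an online algorithm: it assigns a probability distribution to the labels `{−1,1}`. -/
def ValidAlg {d : ℕ} (A : Alg d) : Prop :=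
  ∀ h x, 0 ≤ A h x 1 ∧ 0 ≤ A h x (-1) ∧ A h x 1 + A h x (-1) = 1

/-- Validity of a sequence: features have `‖x_t‖_∞ ≤ 1` and labels lie in `{−1,1}`. -/
def ValidSeq {d T : ℕ} (S : Fin T → (Fin d → ℝ) × ℝ) : Prop :=
  ∀ t, (∀ i, |(S t).1 i| ≤ 1) ∧ ((S t).2 = 1 ∨ (S t).2 = -1)

/-- Cumulative loss `L(A,S_T) = −∑_t log A(S_{t−1}, x_t, y_t)` of an online algorithm. -/
def algLoss {d T : ℕ} (A : Alg d) (S : Fin T → (Fin d → ℝ) × ℝ) : ℝ :=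
  -∑ t, Real.log (A ((List.ofFn S).take t.val) (S t).1 (S t).2)

/-- Regret of an online algorithm against a comparator `θ`. -/
def regret {d T : ℕ} (A : Alg d) (S : Fin T → (Fin d → ℝ) × ℝ) (θ : Fin d → ℝ) : ℝ :=
  algLoss A S - seqLoss θ S

/-- `∏_{(x,y) ∈ h} p(y|x,θ)` over a history `h`. -/
def histProb {d : ℕ} (θ : Fin d → ℝ) (h : List ((Fin d → ℝ) × ℝ)) : ℝ :=
  (h.map (fun s => lprob θ s.1 s.2)).prod

/-- Mixture probability `p(y^t|x^t) = ∫ ∏_τ p(y_τ|x_τ,θ) dp₀(θ)`. -/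
def mixProb {d : ℕ} (p₀ : Measure (Fin d → ℝ)) (h : List ((Fin d → ℝ) × ℝ)) : ℝ :=
  ∫ θ, histProb θ h ∂p₀

/-- The Bayesian mixture algorithm with prior `p₀`. -/
def bayesAlg {d : ℕ} (p₀ : Measure (Fin d → ℝ)) : Alg d :=
  fun h x y => mixProb p₀ (h ++ [(x, y)]) / mixProb p₀ h

/-- Discrete mixture probability for a prior given by a probability mass function `p₀`. -/
def mixProbD {d : ℕ} (p₀ : (Fin d → ℝ) → ℝ) (h : List ((Fin d → ℝ) × ℝ)) : ℝ :=
  ∑' θ, p₀ θ * histProb θ h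

/-- The Bayesian mixture algorithm with a discrete prior `p₀`. -/
def bayesAlgD {d : ℕ} (p₀ : (Fin d → ℝ) → ℝ) : Alg d :=
  fun h x y => mixProbD p₀ (h ++ [(x, y)]) / mixProbD p₀ h

/-- Kullback–Leibler divergence `D(Q‖p₀) = ∫ log (dQ/dp₀) dQ`. -/
def KL {d : ℕ} (Q p₀ : Measure (Fin d → ℝ)) : ℝ :=
  ∫ θ, Real.log (Q.rnDeriv p₀ θ).toReal ∂Q

/-- The label in `{−1,1}` encoded by a Boolean. -/
def signv : Bool → ℝ := fun b => if b then 1 else -1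

/-- Binary entropy function (with `h₂(0) = h₂(1) = 0`, since `Real.log 0 = 0`). -/
def binEnt (p : ℝ) : ℝ := -(p * Real.log p) - (1 - p) * Real.log (1 - p)

end

/-!
The cumulative loss of the mixture telescopes to `-log ∫ exp (-L(θ,S)) dp₀`, and the
Donsker–Varadhan variational formula bounds this by `D(Q‖p₀) + ∫ L(θ,S) dQ` for every `Q ≪ p₀`.
The logistic loss `z ↦ log (1 + exp (-z))` has second derivative at most `1/4`, so in each round
its `Q`-average exceeds its value at the mean `θ*` by at most one eighth of the second moment of
the margin deviation `y⟨x, θ - θ*⟩`; for uncorrelated coordinates of variance `≤ η²` and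
`‖x‖_∞ ≤ 1` that moment is at most `dη²`.
-/

theorem ConvexOn.add_mul_sub_le_of_hasDerivAt {S : Set ℝ} {g : ℝ → ℝ} {g' a b : ℝ}
    (hg : ConvexOn ℝ S g) (ha : a ∈ S) (hb : b ∈ S) (hd : HasDerivAt g g' b) :
    g b + g' * (a - b) ≤ g a := by
  rcases lt_trichotomy a b with hab | rfl | hba
  · have := hg.slope_le_of_hasDerivAt ha hb hab hd
    rw [slope_def_field, div_le_iff₀ (sub_pos.2 hab)] at this
    linarith
  · simp
  · have := hg.le_slope_of_hasDerivAt hb ha hba hd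
    rw [slope_def_field, le_div_iff₀ (sub_pos.2 hba)] at this
    linarith

theorem le_add_mul_sub_add_sq_of_hasDerivAt_of_le {f f' f'' : ℝ → ℝ} {M : ℝ}
    (hf : ∀ x, HasDerivAt f (f' x) x) (hf' : ∀ x, HasDerivAt f' (f'' x) x)
    (hM : ∀ x, f'' x ≤ M) (a b : ℝ) :
    f a ≤ f b + f' b * (a - b) + M / 2 * (a - b) ^ 2 := by
  -- `x ↦ M/2 (x - b)² - f x` is convex, so it lies above its tangent at `b`
  have hg : ∀ x, HasDerivAt (fun x => M / 2 * (x - b) ^ 2 - f x) (M * (x - b) - f' x) x := by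
    intro x
    refine (((((hasDerivAt_id' x).sub_const b).fun_pow 2).const_mul (M / 2)).fun_sub
      (hf x)).congr_deriv ?_
    ring
  have hg' : ∀ x, HasDerivAt (fun x => M * (x - b) - f' x) (M - f'' x) x := by
    intro x
    refine ((((hasDerivAt_id' x).sub_const b).const_mul M).fun_sub (hf' x)).congr_deriv ?_
    ring
  have hconv : ConvexOn ℝ Set.univ (fun x => M / 2 * (x - b) ^ 2 - f x) := by
    refine convexOn_of_hasDerivWithinAt2_nonneg convex_univ
      (fun x _ => (hg x).continuousAt.continuousWithinAt)
      (fun x _ => (hg x).hasDerivWithinAt) (fun x _ => (hg' x).hasDerivWithinAt)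
      (fun x _ => sub_nonneg.2 (hM x))
  have := hconv.add_mul_sub_le_of_hasDerivAt (Set.mem_univ a) (Set.mem_univ b) (hg b)
  simp only [sub_self] at this
  linarith

theorem log_one_add_exp_neg_le (a b : ℝ) :
    log (1 + exp (-a)) ≤ log (1 + exp (-b)) - (1 + exp b)⁻¹ * (a - b) + (a - b) ^ 2 / 8 := by
  have hf : ∀ z, HasDerivAt (fun z => log (1 + exp (-z))) (-(1 + exp z)⁻¹) z := by
    intro z
    have h := (((hasDerivAt_neg z).exp).const_add 1).log (by positivity)
    convert h using 1
    rw [exp_neg]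
    field_simp
    ring
  have hf' : ∀ z, HasDerivAt (fun z => -(1 + exp z)⁻¹) (exp z / (1 + exp z) ^ 2) z := by
    intro z
    exact (((hasDerivAt_exp z).const_add 1).inv (by positivity)).fun_neg.congr_deriv (by ring)
  have hM : ∀ z, exp z / (1 + exp z) ^ 2 ≤ 1 / 4 := by
    intro z
    rw [div_le_iff₀ (by positivity)]
    nlinarith [sq_nonneg (exp z - 1)]
  have := le_add_mul_sub_add_sq_of_hasDerivAt_of_le hf hf' hM a b
  linarith

section Model

variable {d : ℕ}

theorem dotp_sub (x θ θ' : Fin d → ℝ) : dotp x (θ - θ') = dotp x θ - dotp x θ' := by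
  simp only [dotp, Pi.sub_apply, mul_sub, Finset.sum_sub_distrib]

theorem lloss_nonneg (θ x : Fin d → ℝ) (y : ℝ) : 0 ≤ lloss θ x y :=
  log_nonneg (le_add_of_nonneg_right (exp_pos _).le)

theorem measurable_lloss (x : Fin d → ℝ) (y : ℝ) : Measurable fun θ => lloss θ x y := by
  unfold lloss dotp; fun_prop

theorem lprob_eq_exp_neg_lloss (θ x : Fin d → ℝ) (y : ℝ) : lprob θ x y = exp (-lloss θ x y) := by
  rw [lloss, exp_neg, exp_log (by positivity), lprob, one_div]

theorem lloss_le_of_sq_eq_one (θ θs x : Fin d → ℝ) {y : ℝ} (hy : y ^ 2 = 1) :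
    lloss θ x y ≤ lloss θs x y - (1 + exp (y * dotp x θs))⁻¹ * y * dotp x (θ - θs)
      + dotp x (θ - θs) ^ 2 / 8 := by
  have h := log_one_add_exp_neg_le (y * dotp x θ) (y * dotp x θs)
  have hsq : (y * dotp x θ - y * dotp x θs) ^ 2 = dotp x (θ - θs) ^ 2 := by
    rw [dotp_sub, ← mul_sub, mul_pow, hy, one_mul]
  rw [hsq, ← mul_sub, ← dotp_sub, ← mul_assoc] at h
  exact h

theorem lprob_le_one (θ x : Fin d → ℝ) (y : ℝ) : lprob θ x y ≤ 1 := by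
  rw [lprob_eq_exp_neg_lloss, exp_le_one_iff, neg_nonpos]
  exact lloss_nonneg θ x y

theorem histProb_pos (θ : Fin d → ℝ) (h : List ((Fin d → ℝ) × ℝ)) : 0 < histProb θ h :=
  List.prod_pos fun _ hp => by
    obtain ⟨s, -, rfl⟩ := List.mem_map.1 hp
    unfold lprob; positivity

theorem histProb_le_one (θ : Fin d → ℝ) (h : List ((Fin d → ℝ) × ℝ)) : histProb θ h ≤ 1 := by
  induction h with
  | nil => exact le_rfl
  | cons s h ih =>
    simp only [histProb, List.map_cons, List.prod_cons]
    exact mul_le_one₀ (lprob_le_one θ s.1 s.2) (histProb_pos θ h).le ih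

theorem measurable_histProb (h : List ((Fin d → ℝ) × ℝ)) : Measurable fun θ => histProb θ h := by
  induction h with
  | nil => exact measurable_const
  | cons s h ih =>
    simp only [histProb, List.map_cons, List.prod_cons]
    exact (by unfold lprob dotp; fun_prop : Measurable fun θ => lprob θ s.1 s.2).mul ih

theorem histProb_ofFn {T : ℕ} (θ : Fin d → ℝ) (S : Fin T → (Fin d → ℝ) × ℝ) :
    histProb θ (List.ofFn S) = exp (-seqLoss θ S) := by
  simp only [histProb, List.map_ofFn, List.prod_ofFn, Function.comp_def, lprob_eq_exp_neg_lloss,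
    seqLoss, ← Finset.sum_neg_distrib, exp_sum]

end Model

section Moments

variable {d : ℕ} {Q : Measure (Fin d → ℝ)} {θs : Fin d → ℝ}

theorem integrable_dotp_sub [IsFiniteMeasure Q] (hmeanint : ∀ i, Integrable (fun θ => θ i) Q)
    (x : Fin d → ℝ) : Integrable (fun θ => dotp x (θ - θs)) Q :=
  integrable_finsetSum _ fun i _ => ((hmeanint i).sub (integrable_const _)).const_mul _

theorem integral_dotp_sub_eq_zero [IsProbabilityMeasure Q]
    (hmeanint : ∀ i, Integrable (fun θ => θ i) Q) (hmean : ∀ i, ∫ θ, θ i ∂Q = θs i)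
    (x : Fin d → ℝ) : ∫ θ, dotp x (θ - θs) ∂Q = 0 := by
  have hint (i : Fin d) : Integrable (fun θ : Fin d → ℝ => x i * (θ i - θs i)) Q :=
    ((hmeanint i).sub (integrable_const _)).const_mul _
  simp only [dotp, Pi.sub_apply]
  rw [integral_finsetSum _ fun i _ => hint i]
  refine Finset.sum_eq_zero fun i _ => ?_
  rw [integral_const_mul, integral_sub (hmeanint i) (integrable_const _), hmean i]
  simp

theorem dotp_sq (x v : Fin d → ℝ) : dotp x v ^ 2 = ∑ i, ∑ j, x i * x j * (v i * v j) := by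
  rw [dotp, sq, Finset.sum_mul_sum]
  exact Finset.sum_congr rfl fun i _ => Finset.sum_congr rfl fun j _ => by ring

theorem integrable_dotp_sub_sq
    (hmomint : ∀ i j, Integrable (fun θ => (θ i - θs i) * (θ j - θs j)) Q) (x : Fin d → ℝ) :
    Integrable (fun θ => dotp x (θ - θs) ^ 2) Q := by
  simp only [dotp_sq, Pi.sub_apply]
  exact integrable_finsetSum _ fun i _ => integrable_finsetSum _ fun j _ =>
    (hmomint i j).const_mul _

theorem integral_dotp_sub_sq
    (hmomint : ∀ i j, Integrable (fun θ => (θ i - θs i) * (θ j - θs j)) Q)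
    (huncorr : ∀ i j, i ≠ j → ∫ θ, (θ i - θs i) * (θ j - θs j) ∂Q = 0) (x : Fin d → ℝ) :
    ∫ θ, dotp x (θ - θs) ^ 2 ∂Q = ∑ i, x i ^ 2 * ∫ θ, (θ i - θs i) ^ 2 ∂Q := by
  simp only [dotp_sq, Pi.sub_apply]
  rw [integral_finsetSum _ fun i _ => integrable_finsetSum _ fun j _ =>
    (hmomint i j).const_mul _]
  refine Finset.sum_congr rfl fun i _ => ?_
  rw [integral_finsetSum _ fun j _ => (hmomint i j).const_mul _, Finset.sum_eq_single i]
  · simp only [integral_const_mul, sq]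
  · intro j _ hji
    rw [integral_const_mul, huncorr i j hji.symm, mul_zero]
  · simp

theorem integral_dotp_sub_sq_le {η : ℝ}
    (hmomint : ∀ i j, Integrable (fun θ => (θ i - θs i) * (θ j - θs j)) Q)
    (huncorr : ∀ i j, i ≠ j → ∫ θ, (θ i - θs i) * (θ j - θs j) ∂Q = 0)
    (hvar : ∀ i, ∫ θ, (θ i - θs i) ^ 2 ∂Q ≤ η ^ 2) {x : Fin d → ℝ} (hx : ∀ i, |x i| ≤ 1) :
    ∫ θ, dotp x (θ - θs) ^ 2 ∂Q ≤ d * η ^ 2 := by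
  rw [integral_dotp_sub_sq hmomint huncorr]
  calc ∑ i, x i ^ 2 * ∫ θ, (θ i - θs i) ^ 2 ∂Q ≤ ∑ _i : Fin d, 1 * η ^ 2 := by
        refine Finset.sum_le_sum fun i _ => mul_le_mul ?_ (hvar i)
          (integral_nonneg fun θ => sq_nonneg _) zero_le_one
        rw [sq_le_one_iff_abs_le_one]
        exact hx i
    _ = d * η ^ 2 := by simp

end Moments

section Mixture

variable {d : ℕ} (p₀ : Measure (Fin d → ℝ)) [IsProbabilityMeasure p₀]

theorem integrable_histProb (h : List ((Fin d → ℝ) × ℝ)) :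
    Integrable (fun θ => histProb θ h) p₀ :=
  .of_bound (measurable_histProb h).aestronglyMeasurable 1 <| ae_of_all _ fun θ => by
    rw [norm_of_nonneg (histProb_pos θ h).le]; exact histProb_le_one θ h

theorem mixProb_pos (h : List ((Fin d → ℝ) × ℝ)) : 0 < mixProb p₀ h := by
  rw [mixProb, integral_pos_iff_support_of_nonneg (fun θ => (histProb_pos θ h).le)
    (integrable_histProb p₀ h), Function.support_eq_univ fun θ => (histProb_pos θ h).ne']
  simp

theorem log_bayesAlg (h : List ((Fin d → ℝ) × ℝ)) (x : Fin d → ℝ) (y : ℝ) :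
    log (bayesAlg p₀ h x y) = log (mixProb p₀ (h ++ [(x, y)])) - log (mixProb p₀ h) :=
  log_div (mixProb_pos p₀ _).ne' (mixProb_pos p₀ _).ne'

theorem algLoss_bayesAlg {T : ℕ} (S : Fin T → (Fin d → ℝ) × ℝ) :
    algLoss (bayesAlg p₀) S = -log (mixProb p₀ (List.ofFn S)) := by
  set G : ℕ → ℝ := fun n => log (mixProb p₀ ((List.ofFn S).take n))
  have hstep (t : Fin T) :
      log (bayesAlg p₀ ((List.ofFn S).take t) (S t).1 (S t).2) = G (t + 1) - G t := by
    simp [G, log_bayesAlg, List.take_add_one]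
  have hG0 : G 0 = 0 := by simp [G, mixProb, histProb]
  have hGT : G T = log (mixProb p₀ (List.ofFn S)) := by
    simp only [G, List.take_of_length_le (List.length_ofFn).le]
  rw [algLoss, Finset.sum_congr rfl fun t _ => hstep t,
    Fin.sum_univ_eq_sum_range (fun n => G (n + 1) - G n), Finset.sum_range_sub, hG0, hGT, sub_zero]

end Mixture

theorem integral_sub_log_integral_exp_le_integral_llr {α : Type*} [MeasurableSpace α]
    {μ ν : Measure α} [IsProbabilityMeasure μ] [IsProbabilityMeasure ν] (hμν : μ ≪ ν)
    (hllr : Integrable (llr μ ν) μ) {f : α → ℝ} (hfμ : Integrable f μ)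
    (hfν : Integrable (fun x => exp (f x)) ν) :
    ∫ x, f x ∂μ - log (∫ x, exp (f x) ∂ν) ≤ ∫ x, llr μ ν x ∂μ := by
  -- Gibbs' inequality against the tilted measure `ν.tilted f`
  have := isProbabilityMeasure_tilted hfν
  have hac : μ ≪ ν.tilted f := hμν.trans (absolutelyContinuous_tilted hfν)
  have hgibbs := InformationTheory.integral_llr_add_sub_measure_univ_nonneg hac
    (integrable_llr_tilted_right hμν hfμ hllr hfν)
  rw [integral_llr_tilted_right hμν hfμ hfν hllr] at hgibbs
  simp only [probReal_univ] at hgibbs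
  linarith

section Regret

variable {d : ℕ} {Q : Measure (Fin d → ℝ)} {θs : Fin d → ℝ}

theorem integral_lloss_le_of_moments [IsProbabilityMeasure Q] {x : Fin d → ℝ} {y σ2 : ℝ}
    (hy : y ^ 2 = 1) (hint : Integrable (fun θ => dotp x (θ - θs)) Q)
    (hint2 : Integrable (fun θ => dotp x (θ - θs) ^ 2) Q)
    (hmean : ∫ θ, dotp x (θ - θs) ∂Q = 0) (hvar : ∫ θ, dotp x (θ - θs) ^ 2 ∂Q ≤ σ2) :
    Integrable (fun θ => lloss θ x y) Q ∧ ∫ θ, lloss θ x y ∂Q ≤ lloss θs x y + σ2 / 8 := by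
  set c := (1 + exp (y * dotp x θs))⁻¹ * y
  have hbound : Integrable (fun θ => lloss θs x y - c * dotp x (θ - θs)
      + dotp x (θ - θs) ^ 2 / 8) Q :=
    ((integrable_const _).sub' (hint.const_mul c)).add (hint2.div_const 8)
  have hle (θ) := lloss_le_of_sq_eq_one θ θs x hy
  have hlint : Integrable (fun θ => lloss θ x y) Q :=
    hbound.mono' (measurable_lloss x y).aestronglyMeasurable <| ae_of_all _ fun θ => by
      rw [norm_of_nonneg (lloss_nonneg θ x y)]; exact hle θ
  refine ⟨hlint, (integral_mono hlint hbound hle).trans ?_⟩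
  rw [integral_add ((integrable_const _).sub' (hint.const_mul c)) (hint2.div_const 8),
    integral_sub (integrable_const _) (hint.const_mul c), integral_const_mul, hmean,
    integral_div, integral_const]
  simp only [probReal_univ, one_smul, mul_zero, sub_zero]
  linarith

theorem integral_lloss_le [IsProbabilityMeasure Q] {η : ℝ}
    (hmeanint : ∀ i, Integrable (fun θ => θ i) Q)
    (hmomint : ∀ i j, Integrable (fun θ => (θ i - θs i) * (θ j - θs j)) Q)
    (hmean : ∀ i, ∫ θ, θ i ∂Q = θs i)
    (huncorr : ∀ i j, i ≠ j → ∫ θ, (θ i - θs i) * (θ j - θs j) ∂Q = 0)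
    (hvar : ∀ i, ∫ θ, (θ i - θs i) ^ 2 ∂Q ≤ η ^ 2) {x : Fin d → ℝ} {y : ℝ}
    (hx : ∀ i, |x i| ≤ 1) (hy : y = 1 ∨ y = -1) :
    Integrable (fun θ => lloss θ x y) Q ∧ ∫ θ, lloss θ x y ∂Q ≤ lloss θs x y + d * η ^ 2 / 8 :=
  integral_lloss_le_of_moments (by rcases hy with rfl | rfl <;> norm_num)
    (integrable_dotp_sub hmeanint x) (integrable_dotp_sub_sq hmomint x)
    (integral_dotp_sub_eq_zero hmeanint hmean x) (integral_dotp_sub_sq_le hmomint huncorr hvar hx)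

theorem integral_seqLoss_le {T : ℕ} {S : Fin T → (Fin d → ℝ) × ℝ} {c : ℝ}
    (h : ∀ t, Integrable (fun θ => lloss θ (S t).1 (S t).2) Q ∧
      ∫ θ, lloss θ (S t).1 (S t).2 ∂Q ≤ lloss θs (S t).1 (S t).2 + c) :
    Integrable (fun θ => seqLoss θ S) Q ∧ ∫ θ, seqLoss θ S ∂Q ≤ seqLoss θs S + T * c := by
  refine ⟨integrable_finsetSum _ fun t _ => (h t).1, ?_⟩
  simp only [seqLoss]
  rw [integral_finsetSum _ fun t _ => (h t).1]
  calc ∑ t, ∫ θ, lloss θ (S t).1 (S t).2 ∂Q ≤ ∑ t, (lloss θs (S t).1 (S t).2 + c) :=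
        Finset.sum_le_sum fun t _ => (h t).2
    _ = ∑ t, lloss θs (S t).1 (S t).2 + T * c := by simp [Finset.sum_add_distrib]

end Regret

theorem stmt1_general {d : ℕ} (p₀ Q : Measure (Fin d → ℝ))
    [IsProbabilityMeasure p₀] [IsProbabilityMeasure Q]
    (hac : Q ≪ p₀)
    (hKL : Integrable (fun θ => Real.log (Q.rnDeriv p₀ θ).toReal) Q)
    (θs : Fin d → ℝ) (η : ℝ)
    (hmeanint : ∀ i, Integrable (fun θ => θ i) Q)
    (hmomint : ∀ i j, Integrable (fun θ => (θ i - θs i) * (θ j - θs j)) Q)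
    (hmean : ∀ i, ∫ θ, θ i ∂Q = θs i)
    (huncorr : ∀ i j, i ≠ j → ∫ θ, (θ i - θs i) * (θ j - θs j) ∂Q = 0)
    (hvar : ∀ i, ∫ θ, (θ i - θs i) ^ 2 ∂Q ≤ η ^ 2)
    {T : ℕ} (S : Fin T → (Fin d → ℝ) × ℝ) (hS : ValidSeq S) :
    regret (bayesAlg p₀) S θs ≤ KL Q p₀ + d * T * η ^ 2 / 8 := by
  obtain ⟨hint, hle⟩ := integral_seqLoss_le fun t =>
    integral_lloss_le hmeanint hmomint hmean huncorr hvar (hS t).1 (hS t).2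
  have hmix : ∫ θ, exp (-seqLoss θ S) ∂p₀ = mixProb p₀ (List.ofFn S) := by
    simp only [mixProb, histProb_ofFn]
  have hDV := integral_sub_log_integral_exp_le_integral_llr hac hKL hint.fun_neg
    (by simpa only [histProb_ofFn] using integrable_histProb p₀ (List.ofFn S))
  rw [integral_neg, hmix] at hDV
  have hKL_eq : KL Q p₀ = ∫ θ, llr Q p₀ θ ∂Q := rfl
  rw [regret, algLoss_bayesAlg, hKL_eq]
  linarith [show (T : ℝ) * (d * η ^ 2 / 8) = d * T * η ^ 2 / 8 by ring]

/-- variational regret bound for the Bayesian mixture algorithm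
(Theorem `the:variational`): `Regret(A*,S_T,θ*) ≤ D(Q‖p₀) + dTη²/8`. -/
theorem stmt1 {d : ℕ} (p₀ Q : Measure (Fin d → ℝ))
    [IsProbabilityMeasure p₀] [IsProbabilityMeasure Q]
    (hac : Q ≪ p₀)
    (hKL : Integrable (fun θ => Real.log (Q.rnDeriv p₀ θ).toReal) Q)
    (θs : Fin d → ℝ) (η : ℝ) (hη : 0 ≤ η)
    (hmeanint : ∀ i, Integrable (fun θ => θ i) Q)
    (hmomint : ∀ i j, Integrable (fun θ => (θ i - θs i) * (θ j - θs j)) Q)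
    (hmean : ∀ i, ∫ θ, θ i ∂Q = θs i)
    (huncorr : ∀ i j, i ≠ j → ∫ θ, (θ i - θs i) * (θ j - θs j) ∂Q = 0)
    (hvar : ∀ i, ∫ θ, (θ i - θs i) ^ 2 ∂Q ≤ η ^ 2)
    {T : ℕ} (S : Fin T → (Fin d → ℝ) × ℝ) (hS : ValidSeq S) :
    regret (bayesAlg p₀) S θs ≤ KL Q p₀ + d * T * η ^ 2 / 8 :=
  stmt1_general p₀ Q hac hKL θs η hmeanint hmomint hmean huncorr hvar S hS
end

section
/- (Counting lattice points in an ℓ₁ ball.) For every ε > 0, B > 0 and dimension d ∈ ℕ, the set {θ ∈ ℝ^d : θ_i ∈ εℤ for every i, and ‖θ‖₁ ≤ B} is finite and its cardinality is at most Σ_{n=0}^{d} C(d,n)·2^n·(B/ε)^n/n!, where C(d,n) is the binomial coefficient and ‖θ‖₁ = Σ_{i=1}^d |θ_i|. -/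
open MeasureTheory Real Filter

/-! Writing `θ = ε • k`, the lattice points are the integer vectors `k` with `∑ |kᵢ| ≤ N := ⌊B/ε⌋`.
Such a `k` is encoded by its support `s`, the set of its negative coordinates, and the set of
partial sums of `|k|` taken at the points of `s`, an `|s|`-element subset of `{1, …, N}`. The code
is injective, so there are at most `∑ₙ C(d,n) 2ⁿ C(N,n) ≤ ∑ₙ C(d,n) 2ⁿ (B/ε)ⁿ / n!` points. -/

open Finset

theorem StrictMonoOn.eqOn_of_image_eq {α β : Type*} [LinearOrder α] [WellFoundedLT α]
    [Preorder β] {s : Set α} {f g : α → β} (hf : StrictMonoOn f s) (hg : StrictMonoOn g s)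
    (h : f '' s = g '' s) : s.EqOn f g := by
  have := (hf.domRestrict.range_inj hg.domRestrict).1
    (by rwa [Set.range_domRestrict, Set.range_domRestrict])
  exact fun x hx => congrFun this ⟨x, hx⟩

namespace LatticePoints

def supp {ι : Type*} [Fintype ι] (a : ι → ℕ) : Finset ι := univ.filter (a · ≠ 0)

lemma mem_supp {ι : Type*} [Fintype ι] {a : ι → ℕ} {i : ι} : i ∈ supp a ↔ a i ≠ 0 := by
  simp [supp]

section PartialSums

variable {ι : Type*} [LinearOrder ι] [LocallyFiniteOrderBot ι]

def partialSum (a : ι → ℕ) (i : ι) : ℕ := ∑ j ∈ Iic i, a j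

lemma partialSum_eq_add_sum_Iio (a : ι → ℕ) (i : ι) :
    partialSum a i = a i + ∑ j ∈ Iio i, a j := by
  rw [partialSum, Iic_eq_cons_Iio, sum_cons]

lemma partialSum_lt_partialSum {a : ι → ℕ} {i i' : ι} (h : i < i') (hi' : a i' ≠ 0) :
    partialSum a i < partialSum a i' := by
  have : partialSum a i ≤ ∑ j ∈ Iio i', a j :=
    sum_le_sum_of_subset fun j hj => mem_Iio.2 ((mem_Iic.1 hj).trans_lt h)
  rw [partialSum_eq_add_sum_Iio a i']
  omega

variable [Fintype ι]

lemma strictMonoOn_partialSum (a : ι → ℕ) : StrictMonoOn (partialSum a) (supp a) :=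
  fun _ _ _ hj h => partialSum_lt_partialSum h (mem_supp.1 hj)

lemma partialSum_le_sum (a : ι → ℕ) (i : ι) : partialSum a i ≤ ∑ j, a j :=
  sum_le_sum_of_subset (subset_univ _)

/-- Along the support the partial sums increase strictly, so their set of values determines them,
and they determine `a` from left to right. -/
lemma eq_of_supp_eq_of_image_partialSum_eq {a b : ι → ℕ} (hs : supp a = supp b)
    (hT : (supp a).image (partialSum a) = (supp b).image (partialSum b)) : a = b := by
  have hP : Set.EqOn (partialSum a) (partialSum b) (supp a) := by
    refine (strictMonoOn_partialSum a).eqOn_of_image_eq (hs ▸ strictMonoOn_partialSum b) ?_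
    rw [← coe_image, hT, hs, coe_image]
  funext i
  induction i using WellFoundedLT.induction with
  | _ i ih =>
    by_cases hi : i ∈ supp a
    · have hprefix : ∑ j ∈ Iio i, a j = ∑ j ∈ Iio i, b j :=
        sum_congr rfl fun j hj => ih j (mem_Iio.1 hj)
      have := hP hi
      rw [partialSum_eq_add_sum_Iio, partialSum_eq_add_sum_Iio, hprefix] at this
      omega
    · have hi' : i ∉ supp b := hs ▸ hi
      rw [mem_supp, not_not] at hi hi'
      rw [hi, hi']

end PartialSums

def codeSpace (ι : Type*) [Fintype ι] (N : ℕ) : Finset (Σ _ : Finset ι, Finset ι × Finset ℕ) :=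
  univ.powerset.sigma fun s => s.powerset ×ˢ (Icc 1 N).powersetCard s.card

lemma card_codeSpace (ι : Type*) [Fintype ι] (N : ℕ) : #(codeSpace ι N) =
    ∑ n ∈ range (Fintype.card ι + 1), (Fintype.card ι).choose n * 2 ^ n * N.choose n := by
  rw [codeSpace, card_sigma]
  simp only [card_product, card_powerset, card_powersetCard, Nat.card_Icc, Nat.add_sub_cancel]
  rw [sum_powerset_apply_card (fun n => 2 ^ n * N.choose n), card_univ]
  simp only [smul_eq_mul, mul_assoc]

variable {ι : Type*} [LinearOrder ι] [LocallyFiniteOrderBot ι] [Fintype ι]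

def code (k : ι → ℤ) : Σ _ : Finset ι, Finset ι × Finset ℕ :=
  let a := fun i => (k i).natAbs
  ⟨supp a, univ.filter (k · < 0), (supp a).image (partialSum a)⟩

lemma code_mem_codeSpace {N : ℕ} {k : ι → ℤ} (hk : ∑ i, (k i).natAbs ≤ N) :
    code k ∈ codeSpace ι N := by
  refine mem_sigma.2 ⟨mem_powerset.2 (subset_univ _), mem_product.2 ⟨?_, ?_⟩⟩
  · exact mem_powerset.2 fun i hi => mem_supp.2 (by simp only [code, mem_filter] at hi; omega)
  · refine mem_powersetCard.2 ⟨?_, card_image_of_injOn (strictMonoOn_partialSum _).injOn⟩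
    intro _ hx
    obtain ⟨i, hi, rfl⟩ := mem_image.1 hx
    have := mem_supp.1 hi
    exact mem_Icc.2
      ⟨by rw [partialSum_eq_add_sum_Iio]; omega, (partialSum_le_sum _ i).trans hk⟩

lemma code_injective : Function.Injective (code (ι := ι)) := by
  intro k k' h
  simp only [code, Sigma.mk.injEq, Prod.mk.injEq, heq_eq_eq] at h
  obtain ⟨hs, hneg, hT⟩ := h
  have habs := congrFun (eq_of_supp_eq_of_image_partialSum_eq hs hT)
  funext i
  have hnatAbs := habs i
  have hsign := congrArg (i ∈ ·) hneg
  simp only [mem_filter, mem_univ, true_and, eq_iff_iff] at hsign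
  omega

lemma finite_setOf_sum_natAbs_le (N : ℕ) : {k : ι → ℤ | ∑ i, (k i).natAbs ≤ N}.Finite :=
  .of_injOn (fun _ hk => code_mem_codeSpace hk) code_injective.injOn
    (codeSpace ι N).finite_toSet

lemma ncard_setOf_sum_natAbs_le (N : ℕ) : {k : ι → ℤ | ∑ i, (k i).natAbs ≤ N}.ncard ≤
    ∑ n ∈ range (Fintype.card ι + 1), (Fintype.card ι).choose n * 2 ^ n * N.choose n := by
  rw [← card_codeSpace, ← Set.ncard_coe_finset]
  exact Set.ncard_le_ncard_of_injOn code (fun _ hk => code_mem_codeSpace hk)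
    code_injective.injOn (codeSpace ι N).finite_toSet

lemma subset_image_setOf_sum_natAbs_le {ι : Type*} [Fintype ι] {ε : ℝ} (hε : 0 < ε) (B : ℝ) :
    {θ : ι → ℝ | (∀ i, ∃ k : ℤ, θ i = ε * k) ∧ ∑ i, |θ i| ≤ B} ⊆
      (fun k i => ε * k i) '' {k : ι → ℤ | ∑ i, (k i).natAbs ≤ ⌊B / ε⌋₊} := by
  rintro θ ⟨hθ, hB⟩
  choose k hk using hθ
  refine ⟨k, Nat.le_floor ?_, funext fun i => (hk i).symm⟩
  rw [le_div_iff₀ hε]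
  calc ((∑ i, (k i).natAbs : ℕ) : ℝ) * ε = ∑ i, |θ i| := by
        push_cast
        rw [sum_mul]
        refine sum_congr rfl fun i _ => ?_
        rw [hk i, abs_mul, abs_of_pos hε, Nat.cast_natAbs, Int.cast_abs, mul_comm]
    _ ≤ B := hB

end LatticePoints

open LatticePoints

/-- counting lattice points in an `ℓ₁` ball: the set of points of the
lattice `εℤ^d` of `ℓ₁`-norm at most `B` is finite, of cardinality at most
`∑_{n=0}^d C(d,n)·2^n·(B/ε)^n/n!`. -/
theorem stmt16 (ε B : ℝ) (hε : 0 < ε) (hB : 0 < B) (d : ℕ) :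
    {θ : Fin d → ℝ | (∀ i, ∃ k : ℤ, θ i = ε * k) ∧ (∑ i, |θ i|) ≤ B}.Finite ∧
      (Nat.card {θ : Fin d → ℝ | (∀ i, ∃ k : ℤ, θ i = ε * k) ∧ (∑ i, |θ i|) ≤ B} : ℝ) ≤
        ∑ n ∈ Finset.range (d + 1),
          (d.choose n : ℝ) * 2 ^ n * (B / ε) ^ n / (n.factorial : ℝ) := by
  set N := ⌊B / ε⌋₊
  have hsub := subset_image_setOf_sum_natAbs_le (ι := Fin d) hε B
  have hball := finite_setOf_sum_natAbs_le (ι := Fin d) N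
  have hfin := hball.image (fun k i => ε * k i)
  refine ⟨hfin.subset hsub, ?_⟩
  have hcard := (Set.ncard_le_ncard hsub hfin).trans (Set.ncard_image_le hball) |>.trans
    (ncard_setOf_sum_natAbs_le N)
  rw [Fintype.card_fin] at hcard
  rw [Nat.card_coe_set_eq]
  calc _ ≤ ((∑ n ∈ range (d + 1), d.choose n * 2 ^ n * N.choose n : ℕ) : ℝ) := by
        exact_mod_cast hcard
    _ ≤ _ := by
        push_cast
        gcongr with n
        rw [mul_div_assoc]
        gcongr
        have hN : (N : ℝ) ≤ B / ε := Nat.floor_le (by positivity)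
        exact (Nat.choose_le_pow_div (α := ℝ) n N).trans (by gcongr)
end
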